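/- Let p be a prime, let F ∈ ℤ_p⟦T⟧ be nonzero with μ(F) = 0, and let n ≥ 0 satisfy λ(F) < p^n. Suppose F = ω_n·Q + R with Q ∈ ℤ_p⟦T⟧ and R ∈ ℤ_p[T] of degree < p^n. Then p does not divide R in ℤ_p[T]; that is, μ(R) = 0. -/

import Mathlib

open PowerSeries Polynomial Classical in
/-- `p`-adic valuation on `ℤ_[p]`, with value `⊤` at `0`. -/
noncomputable def vp (p : ℕ) [Fact p.Prime] (x : ℤ_[p]) : ℕ∞ :=
  if x = 0 then ⊤ else (x.valuation : ℕ∞)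

/-- Iwasawa `μ`-invariant: the minimum of the `p`-adic valuations of the coefficients. -/
noncomputable def mu (p : ℕ) [Fact p.Prime] (F : PowerSeries ℤ_[p]) : ℕ∞ :=
  ⨅ i : ℕ, vp p (PowerSeries.coeff i F)

/-- Iwasawa `λ`-invariant: the least index whose coefficient valuation attains `μ`. -/
noncomputable def lam (p : ℕ) [Fact p.Prime] (F : PowerSeries ℤ_[p]) : ℕ :=
  sInf { i : ℕ | vp p (PowerSeries.coeff i F) = mu p F }

/-!
Modulo `p`, `ω_n = (1 + T)^{p^n} - 1` is congruent to `T^{p^n}`, since `p` divides the binomial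
coefficients `C(p^n, i)` for `0 < i < p^n`. Hence the coefficients of index `< p^n` of `ω_n Q`
are divisible by `p`, so `R` agrees with `F` modulo `p` in these degrees. In degree `λ(F) < p^n`
the coefficient of `F` is a `p`-adic unit because `μ(F) = 0`, hence so is that of `R`.
-/

open PowerSeries

section Divisibility

variable {A : Type*} [CommRing A]

theorem dvd_coeff_one_add_X_pow_sub_one (p : ℕ) [Fact p.Prime] (n : ℕ) {i : ℕ} (hi : i < p ^ n) :
    (p : A) ∣ ((1 + Polynomial.X) ^ p ^ n - 1 : Polynomial A).coeff i := by
  rw [Polynomial.coeff_sub, Polynomial.coeff_one_add_X_pow, Polynomial.coeff_one]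
  rcases Nat.eq_zero_or_pos i with rfl | hpos
  · simp
  · obtain ⟨c, hc⟩ := (Fact.out : p.Prime).dvd_choose_pow hpos.ne' hi.ne
    exact ⟨c, by rw [if_neg hpos.ne', sub_zero, hc, Nat.cast_mul]⟩

theorem PowerSeries.dvd_coeff_mul_of_dvd_coeff_le {a : A} {f : A⟦X⟧} (g : A⟦X⟧) {l : ℕ}
    (hf : ∀ i ≤ l, a ∣ coeff i f) : a ∣ coeff l (f * g) := by
  rw [coeff_mul]
  refine Finset.dvd_sum fun ij hij => (hf ij.1 ?_).mul_right _
  rw [Finset.HasAntidiagonal.mem_antidiagonal] at hij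
  omega

end Divisibility

section Invariants

variable {p : ℕ} [Fact p.Prime]

theorem vp_eq_zero_iff {x : ℤ_[p]} : vp p x = 0 ↔ ¬ (p : ℤ_[p]) ∣ x := by
  by_cases hx : x = 0
  · simp [vp, hx]
  · have hdvd := PadicInt.mem_span_pow_iff_le_valuation x hx 1
    rw [pow_one, Ideal.mem_span_singleton] at hdvd
    simp only [vp, if_neg hx, hdvd, Nat.cast_eq_zero, not_le, Nat.lt_one_iff]

theorem mu_eq_zero_iff {F : ℤ_[p]⟦X⟧} : mu p F = 0 ↔ ∃ i, ¬ (p : ℤ_[p]) ∣ coeff i F := by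
  simp only [mu, ENat.iInf_eq_zero, vp_eq_zero_iff]

theorem vp_coeff_lam (F : ℤ_[p]⟦X⟧) : vp p (coeff (lam p F) F) = mu p F :=
  Nat.sInf_mem (ENat.exists_eq_iInf fun i => vp p (coeff i F))

theorem not_dvd_coeff_lam_of_mu_eq_zero {F : ℤ_[p]⟦X⟧} (hmu : mu p F = 0) :
    ¬ (p : ℤ_[p]) ∣ coeff (lam p F) F :=
  vp_eq_zero_iff.mp ((vp_coeff_lam F).trans hmu)

end Invariants

theorem stmt_1_general (p : ℕ) [Fact p.Prime] (F : PowerSeries ℤ_[p])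
    (hmu : mu p F = 0) (n : ℕ) (hlam : lam p F < p ^ n)
    (Q : PowerSeries ℤ_[p]) (R : Polynomial ℤ_[p])
    (hFQR : F = (((1 + Polynomial.X) ^ p ^ n - 1 : Polynomial ℤ_[p]) : PowerSeries ℤ_[p]) * Q
      + (R : PowerSeries ℤ_[p])) :
    ¬ (Polynomial.C (p : ℤ_[p]) ∣ R) ∧ mu p (R : PowerSeries ℤ_[p]) = 0 := by
  set l := lam p F
  have hωQ : (p : ℤ_[p]) ∣ coeff l
      ((((1 + Polynomial.X) ^ p ^ n - 1 : Polynomial ℤ_[p]) : PowerSeries ℤ_[p]) * Q) :=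
    dvd_coeff_mul_of_dvd_coeff_le Q fun i hi => by
      rw [Polynomial.coeff_coe]
      exact dvd_coeff_one_add_X_pow_sub_one p n (hi.trans_lt hlam)
  have hR : ¬ (p : ℤ_[p]) ∣ R.coeff l := fun hdvd =>
    not_dvd_coeff_lam_of_mu_eq_zero hmu <| by
      have hcoeff := congrArg (coeff l) hFQR
      rw [map_add, Polynomial.coeff_coe] at hcoeff
      rw [hcoeff]
      exact dvd_add hωQ hdvd
  refine ⟨fun hC => hR (Polynomial.C_dvd_iff_dvd_coeff _ _ |>.mp hC l), ?_⟩
  exact mu_eq_zero_iff.mpr ⟨l, by rwa [Polynomial.coeff_coe]⟩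

theorem stmt_1 (p : ℕ) [Fact p.Prime] (F : PowerSeries ℤ_[p]) (hF : F ≠ 0)
    (hmu : mu p F = 0) (n : ℕ) (hlam : lam p F < p ^ n)
    (Q : PowerSeries ℤ_[p]) (R : Polynomial ℤ_[p]) (hdeg : R.degree < (p ^ n : ℕ))
    (hFQR : F = (((1 + Polynomial.X) ^ p ^ n - 1 : Polynomial ℤ_[p]) : PowerSeries ℤ_[p]) * Q
      + (R : PowerSeries ℤ_[p])) :
    ¬ (Polynomial.C (p : ℤ_[p]) ∣ R) ∧ mu p (R : PowerSeries ℤ_[p]) = 0 :=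
  stmt_1_general p F hmu n hlam Q R hFQR
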